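/- arXiv:1812.03105 — 3 statements merged into one kernel-verified Lean document; each statement's English description precedes it below -/
import Mathlib

section
/- Fix d_max ≥ 1, nonnegative initial values x̃_i(0) (i = 0,...,d_max), ỹ_E(0), z̃_E(0), and p_I ∈ [0,1], q_I = 1 - p_I. Consider the ODE system on [0,∞): dx̃_i/dt = -i x̃_i for each i; dỹ_E/dt = Σ_{i=2}^{d_max} i(i-1) p_I x̃_i - x̃_E - 2 ỹ_E - z̃_E, where x̃_E = Σ_{i=1}^{d_max} i x̃_i; and dz̃_E/dt = Σ_{i=2}^{d_max} i(i-1) q_I x̃_i - z̃_E. Then the unique solution is x̃_i(t) = x̃_i(0) e^{-it}, z̃_E(t) = [z̃_E(0) + q_I x̃_E(0)] e^{-t} - q_I Σ_{i=1}^{d_max} i x̃_i(0) e^{-it}, and ỹ_E(t) = (x̃_E(0) + ỹ_E(0) + z̃_E(0)) e^{-2t} - [z̃_E(0) + q_I x̃_E(0)] e^{-t} - p_I Σ_{i=1}^{d_max} i x̃_i(0) e^{-it}. -/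
/-!
Each `x i` decays at rate `i`, so `xE` is an explicit sum of exponentials with
`xE' = -∑ i² x i`. Since `i (i - 1) = i² - i`, the infection terms cancel against `xE'` in the two
combinations `w = z + qI xE` and `η = xE + y + z` (the latter using `pI + qI = 1`), which
therefore satisfy `w' = -w` and `η' = -2η`. Solving these and subtracting gives `z` and `y`.
-/

open Finset Real

theorem eq_exp_smul_of_hasDerivAt_neg_smul {E : Type*} [NormedAddCommGroup E] [NormedSpace ℝ E]
    {f : ℝ → E} (c : ℝ) (hf : ∀ t ≥ (0 : ℝ), HasDerivAt f (-c • f t) t) :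
    ∀ t ≥ (0 : ℝ), f t = exp (-c * t) • f 0 := by
  have hg : ∀ t ≥ (0 : ℝ), HasDerivAt (fun s => exp (c * s) • f s) 0 t := by
    intro t ht
    have he : HasDerivAt (fun s => exp (c * s)) (exp (c * t) * c) t := by
      simpa using ((hasDerivAt_id t).const_mul c).exp
    convert he.fun_smul (hf t ht) using 1
    rw [smul_smul, ← add_smul]
    ring_nf
    simp
  intro t ht
  have hconst := constant_of_has_deriv_right_zero (a := 0) (b := t)
    (fun s hs => (hg s hs.1).continuousAt.continuousWithinAt)
    (fun s hs => (hg s hs.1).hasDerivWithinAt) t ⟨ht, le_rfl⟩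
  simp only [mul_zero, exp_zero, one_smul] at hconst
  rw [← hconst, smul_smul, ← exp_add]
  simp

theorem sum_Icc_two_mul_sub_one_mul (n : ℕ) (a : ℝ) (g : ℕ → ℝ) :
    ∑ i ∈ Icc 2 n, (i : ℝ) * ((i : ℝ) - 1) * a * g i
      = a * (∑ i ∈ Icc 1 n, (i : ℝ) * ((i : ℝ) * g i) - ∑ i ∈ Icc 1 n, (i : ℝ) * g i) := by
  rw [← sum_sub_distrib, mul_sum]
  have hsub : Icc 2 n ⊆ Icc 1 n := Icc_subset_Icc_left one_le_two
  rw [← sum_subset hsub]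
  · exact sum_congr rfl fun i _ => by ring
  · intro i hi hi2
    obtain rfl : i = 1 := by simp only [mem_Icc] at hi hi2; omega
    simp

theorem deterministic_system_solution_general
    (dmax : ℕ)
    (x : ℕ → ℝ → ℝ) (y z : ℝ → ℝ)
    (pI qI : ℝ) (hq : qI = 1 - pI)
    (xE : ℝ → ℝ) (hxE : ∀ t, xE t = ∑ i ∈ Finset.Icc 1 dmax, (i : ℝ) * x i t)
    (hdx : ∀ i ≤ dmax, ∀ t ≥ (0 : ℝ), HasDerivAt (x i) (-(i : ℝ) * x i t) t)
    (hdy : ∀ t ≥ (0 : ℝ), HasDerivAt y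
      ((∑ i ∈ Finset.Icc 2 dmax, (i : ℝ) * ((i : ℝ) - 1) * pI * x i t)
        - xE t - 2 * y t - z t) t)
    (hdz : ∀ t ≥ (0 : ℝ), HasDerivAt z
      ((∑ i ∈ Finset.Icc 2 dmax, (i : ℝ) * ((i : ℝ) - 1) * qI * x i t) - z t) t) :
    ∀ t ≥ (0 : ℝ),
      (∀ i ≤ dmax, x i t = x i 0 * Real.exp (-(i : ℝ) * t))
      ∧ z t = (z 0 + qI * xE 0) * Real.exp (-t)
          - qI * ∑ i ∈ Finset.Icc 1 dmax, (i : ℝ) * x i 0 * Real.exp (-(i : ℝ) * t)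
      ∧ y t = (xE 0 + y 0 + z 0) * Real.exp (-2 * t)
          - (z 0 + qI * xE 0) * Real.exp (-t)
          - pI * ∑ i ∈ Finset.Icc 1 dmax, (i : ℝ) * x i 0 * Real.exp (-(i : ℝ) * t) := by
  have hx : ∀ i ≤ dmax, ∀ t ≥ (0 : ℝ), x i t = x i 0 * exp (-(i : ℝ) * t) := fun i hi t ht => by
    rw [eq_exp_smul_of_hasDerivAt_neg_smul (i : ℝ) (hdx i hi) t ht, smul_eq_mul, mul_comm]
  have hdxE : ∀ t ≥ (0 : ℝ), HasDerivAt xE (-∑ i ∈ Icc 1 dmax, (i : ℝ) * ((i : ℝ) * x i t)) t := by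
    intro t ht
    rw [show xE = fun s => ∑ i ∈ Icc 1 dmax, (i : ℝ) * x i s from funext hxE, ← sum_neg_distrib]
    exact HasDerivAt.fun_sum fun i hi =>
      ((hdx i (mem_Icc.mp hi).2 t ht).const_mul (i : ℝ)).congr_deriv (by ring)
  have hw := eq_exp_smul_of_hasDerivAt_neg_smul (f := fun t => z t + qI * xE t) 1 fun t ht => by
    refine ((hdz t ht).add ((hdxE t ht).const_mul qI)).congr_deriv ?_
    rw [sum_Icc_two_mul_sub_one_mul, ← hxE]
    simp only [smul_eq_mul]
    ring
  have hη := eq_exp_smul_of_hasDerivAt_neg_smul (f := fun t => xE t + y t + z t) 2 fun t ht => by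
    refine (((hdxE t ht).add (hdy t ht)).add (hdz t ht)).congr_deriv ?_
    simp only [sum_Icc_two_mul_sub_one_mul, ← hxE, smul_eq_mul, hq]
    ring
  intro t ht
  have hxEt : xE t = ∑ i ∈ Icc 1 dmax, (i : ℝ) * x i 0 * exp (-(i : ℝ) * t) := by
    rw [hxE]
    exact sum_congr rfl fun i hi => by rw [hx i (mem_Icc.mp hi).2 t ht, mul_assoc]
  have hwt := hw t ht
  have hηt := hη t ht
  simp only [smul_eq_mul, neg_one_mul] at hwt hηt
  rw [← hxEt]
  exact ⟨fun i hi => hx i hi t ht, by linear_combination hwt,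
    by linear_combination hηt - hwt + hq * xE t⟩

/-- Explicit solution of the deterministic (LLN-limit) system for the time-transformed
SIR epidemic on a configuration model graph: any solution of the ODE system equals the
stated exponential formulas. -/
theorem deterministic_system_solution
    (dmax : ℕ) (hd : 1 ≤ dmax)
    (x : ℕ → ℝ → ℝ) (y z : ℝ → ℝ)
    (pI qI : ℝ) (hpI : pI ∈ Set.Icc (0 : ℝ) 1) (hq : qI = 1 - pI)
    (hx0 : ∀ i ≤ dmax, 0 ≤ x i 0) (hy0 : 0 ≤ y 0) (hz0 : 0 ≤ z 0)
    (xE : ℝ → ℝ) (hxE : ∀ t, xE t = ∑ i ∈ Finset.Icc 1 dmax, (i : ℝ) * x i t)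
    (hdx : ∀ i ≤ dmax, ∀ t ≥ (0 : ℝ), HasDerivAt (x i) (-(i : ℝ) * x i t) t)
    (hdy : ∀ t ≥ (0 : ℝ), HasDerivAt y
      ((∑ i ∈ Finset.Icc 2 dmax, (i : ℝ) * ((i : ℝ) - 1) * pI * x i t)
        - xE t - 2 * y t - z t) t)
    (hdz : ∀ t ≥ (0 : ℝ), HasDerivAt z
      ((∑ i ∈ Finset.Icc 2 dmax, (i : ℝ) * ((i : ℝ) - 1) * qI * x i t) - z t) t) :
    ∀ t ≥ (0 : ℝ),
      (∀ i ≤ dmax, x i t = x i 0 * Real.exp (-(i : ℝ) * t))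
      ∧ z t = (z 0 + qI * xE 0) * Real.exp (-t)
          - qI * ∑ i ∈ Finset.Icc 1 dmax, (i : ℝ) * x i 0 * Real.exp (-(i : ℝ) * t)
      ∧ y t = (xE 0 + y 0 + z 0) * Real.exp (-2 * t)
          - (z 0 + qI * xE 0) * Real.exp (-t)
          - pI * ∑ i ∈ Finset.Icc 1 dmax, (i : ℝ) * x i 0 * Real.exp (-(i : ℝ) * t) :=
  deterministic_system_solution_general dmax x y z pI qI hq xE hxE hdx hdy hdz
end

section
/- Under the ODE system dx̃_i/dt = -i x̃_i (i = 1,...,d_max), dỹ_E/dt = Σ_i i(i-1)p_I x̃_i - x̃_E - 2ỹ_E - z̃_E, dz̃_E/dt = Σ_i i(i-1)q_I x̃_i - z̃_E with x̃_E = Σ_i i x̃_i, the quantity η̃ = x̃_E + ỹ_E + z̃_E satisfies η̃(t) = η̃(0) e^{-2t} for all t ≥ 0. -/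
/-!
The transfer terms `i (i - 1) p_I x̃_i` and `i (i - 1) q_I x̃_i` add up to `i (i - 1) x̃_i` since
`p_I + q_I = 1`, and `i (i - 1) - i² = -i`, so `dη̃/dt = -x̃_E - x̃_E - 2ỹ_E - 2z̃_E = -2η̃`.
A function with `f' = c f` on `[a, ∞)` equals `f(a) e^{c (t - a)}` there, because
`f(t) e^{-c (t - a)}` has zero derivative.
-/

open Finset Real

theorem eq_mul_exp_of_hasDerivAt_const_mul {f : ℝ → ℝ} {a c : ℝ}
    (hf : ∀ t ≥ a, HasDerivAt f (c * f t) t) :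
    ∀ t ≥ a, f t = f a * exp (c * (t - a)) := by
  set g : ℝ → ℝ := fun s => f s * exp (-(c * (s - a)))
  have hg : ∀ s ≥ a, HasDerivAt g 0 s := by
    intro s hs
    have hexp : HasDerivAt (fun s => exp (-(c * (s - a)))) (exp (-(c * (s - a))) * -(c * 1)) s :=
      (((hasDerivAt_id s).sub_const a).const_mul c).neg.exp
    exact ((hf s hs).mul hexp).congr_deriv (by ring)
  intro t ht
  have hconst : g t = g a :=
    constant_of_has_deriv_right_zero (fun s hs => (hg s hs.1).continuousAt.continuousWithinAt)
      (fun s hs => (hg s hs.1).hasDerivWithinAt) t ⟨ht, le_rfl⟩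
  simp only [g, sub_self, mul_zero, neg_zero, exp_zero, mul_one] at hconst
  rw [← hconst, mul_assoc, ← exp_add, neg_add_cancel, exp_zero, mul_one]

theorem sum_Icc_two_mul_sub_one_eq_sum_Icc_one (n : ℕ) (a : ℕ → ℝ) :
    ∑ i ∈ Icc 2 n, (i : ℝ) * ((i : ℝ) - 1) * a i = ∑ i ∈ Icc 1 n, (i : ℝ) * ((i : ℝ) - 1) * a i := by
  refine sum_subset (Icc_subset_Icc_left (by norm_num)) fun i hi hni => ?_
  obtain rfl : i = 1 := by
    simp only [mem_Icc] at hi hni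
    omega
  norm_num

theorem sum_neg_sq_add_transfer_eq_neg (n : ℕ) (a : ℕ → ℝ) {p q : ℝ} (hpq : p + q = 1) :
    ∑ i ∈ Icc 1 n, (i : ℝ) * (-(i : ℝ) * a i)
      + ∑ i ∈ Icc 2 n, (i : ℝ) * ((i : ℝ) - 1) * p * a i
      + ∑ i ∈ Icc 2 n, (i : ℝ) * ((i : ℝ) - 1) * q * a i
      = -∑ i ∈ Icc 1 n, (i : ℝ) * a i := by
  have htransfer : ∑ i ∈ Icc 2 n, (i : ℝ) * ((i : ℝ) - 1) * p * a i
      + ∑ i ∈ Icc 2 n, (i : ℝ) * ((i : ℝ) - 1) * q * a i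
      = ∑ i ∈ Icc 1 n, (i : ℝ) * ((i : ℝ) - 1) * a i := by
    rw [← sum_add_distrib, ← sum_Icc_two_mul_sub_one_eq_sum_Icc_one]
    refine sum_congr rfl fun i _ => ?_
    linear_combination (i : ℝ) * ((i : ℝ) - 1) * a i * hpq
  rw [add_assoc, htransfer, ← sum_add_distrib, ← sum_neg_distrib]
  exact sum_congr rfl fun i _ => by ring

theorem eta_decay_general
    (dmax : ℕ)
    (x : ℕ → ℝ → ℝ) (y z : ℝ → ℝ)
    (pI qI : ℝ) (hpq : pI + qI = 1)
    (xE : ℝ → ℝ) (hxE : ∀ t, xE t = ∑ i ∈ Finset.Icc 1 dmax, (i : ℝ) * x i t)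
    (hdx : ∀ i ≤ dmax, ∀ t ≥ (0 : ℝ), HasDerivAt (x i) (-(i : ℝ) * x i t) t)
    (hdy : ∀ t ≥ (0 : ℝ), HasDerivAt y
      ((∑ i ∈ Finset.Icc 2 dmax, (i : ℝ) * ((i : ℝ) - 1) * pI * x i t)
        - xE t - 2 * y t - z t) t)
    (hdz : ∀ t ≥ (0 : ℝ), HasDerivAt z
      ((∑ i ∈ Finset.Icc 2 dmax, (i : ℝ) * ((i : ℝ) - 1) * qI * x i t) - z t) t)
    (η : ℝ → ℝ) (hη : ∀ t, η t = xE t + y t + z t) :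
    ∀ t ≥ (0 : ℝ), η t = η 0 * Real.exp (-2 * t) := by
  have hdxE : ∀ t ≥ (0 : ℝ), HasDerivAt xE (∑ i ∈ Icc 1 dmax, (i : ℝ) * (-(i : ℝ) * x i t)) t := by
    intro t ht
    rw [funext hxE]
    exact HasDerivAt.fun_sum fun i hi => (hdx i (mem_Icc.1 hi).2 t ht).const_mul _
  have hdη : ∀ t ≥ (0 : ℝ), HasDerivAt η (-2 * η t) t := by
    intro t ht
    rw [hη t, funext hη]
    refine (((hdxE t ht).add (hdy t ht)).add (hdz t ht)).congr_deriv ?_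
    linear_combination sum_neg_sq_add_transfer_eq_neg dmax (x · t) hpq + hxE t
  intro t ht
  simpa using eq_mul_exp_of_hasDerivAt_const_mul hdη t ht

/-- Under the deterministic limiting system for the time-transformed SIR epidemic, the
total half-edge density `η̃ = x̃_E + ỹ_E + z̃_E` satisfies `η̃(t) = η̃(0) e^{-2t}`. -/
theorem eta_decay
    (dmax : ℕ) (hd : 1 ≤ dmax)
    (x : ℕ → ℝ → ℝ) (y z : ℝ → ℝ)
    (pI qI : ℝ) (hpq : pI + qI = 1)
    (xE : ℝ → ℝ) (hxE : ∀ t, xE t = ∑ i ∈ Finset.Icc 1 dmax, (i : ℝ) * x i t)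
    (hdx : ∀ i ≤ dmax, ∀ t ≥ (0 : ℝ), HasDerivAt (x i) (-(i : ℝ) * x i t) t)
    (hdy : ∀ t ≥ (0 : ℝ), HasDerivAt y
      ((∑ i ∈ Finset.Icc 2 dmax, (i : ℝ) * ((i : ℝ) - 1) * pI * x i t)
        - xE t - 2 * y t - z t) t)
    (hdz : ∀ t ≥ (0 : ℝ), HasDerivAt z
      ((∑ i ∈ Finset.Icc 2 dmax, (i : ℝ) * ((i : ℝ) - 1) * qI * x i t) - z t) t)
    (η : ℝ → ℝ) (hη : ∀ t, η t = xE t + y t + z t) :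
    ∀ t ≥ (0 : ℝ), η t = η 0 * Real.exp (-2 * t) :=
  eta_decay_general dmax x y z pI qI hpq xE hxE hdx hdy hdz η hη
end

section
/- Let the degree distribution D be non-degenerate (not concentrated at a single point) with bounded support. Then the asymptotic final-size variance for the SIR epidemic on the Newman–Strogatz–Watts random graph strictly exceeds that on the Molloy–Reed random graph: σ²_NSW > σ²_MR. Specifically, σ²_NSW - σ²_MR = (1-ε) c Σ_{XX} cᵀ + ε h(z)² (z - q_I)² σ_D² > 0, where c = c(τ̃,0) restricted to susceptible coordinates, Σ_{XX} is the positive semidefinite multinomial covariance matrix of (p_i), h(z) = b(τ̃)z, and σ_D² = Var(D) > 0. -/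
/-! Write `c` as `z^i + α i - β i z^i`. Its first two moments under `p` are polynomial in the
pgf `f_D` and its first two derivatives at `z` and `z²`, in the mean and in `Var D`. Eliminating
`b = h / z`, `f_D'(z)` (final-size equation) and `f_D''(z)` (definition of `h`) turns
`σ²_NSW - σ²_MR` into `(1-ε) Var c(D) + ε h² (z-q_I)² Var D`. The first summand is nonnegative;
the second is positive since `f_D'(z) > 0` forces `z > q_I`, which makes `h ≠ 0`, and
`Var D > 0` for non-degenerate `D`. -/

open Finset

section WeightedVariance

variable {ι : Type*} (s : Finset ι) {p : ι → ℝ}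

theorem sum_mul_sq_sub_sq_sum_mul_eq (hsum : ∑ i ∈ s, p i = 1) (x : ι → ℝ) :
    ∑ i ∈ s, p i * x i ^ 2 - (∑ i ∈ s, p i * x i) ^ 2
      = ∑ i ∈ s, p i * (x i - ∑ j ∈ s, p j * x j) ^ 2 := by
  set m := ∑ j ∈ s, p j * x j
  calc ∑ i ∈ s, p i * x i ^ 2 - m ^ 2
      = ∑ i ∈ s, p i * x i ^ 2 - 2 * m * m + m ^ 2 * ∑ i ∈ s, p i := by rw [hsum]; ring
    _ = ∑ i ∈ s, (p i * x i ^ 2 - 2 * m * (p i * x i) + m ^ 2 * p i) := by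
      rw [sum_add_distrib, sum_sub_distrib, ← mul_sum, ← mul_sum]
    _ = ∑ i ∈ s, p i * (x i - m) ^ 2 := sum_congr rfl fun i _ => by ring

theorem sum_mul_sq_sub_sq_sum_mul_nonneg (hp : ∀ i ∈ s, 0 ≤ p i) (hsum : ∑ i ∈ s, p i = 1)
    (x : ι → ℝ) : 0 ≤ ∑ i ∈ s, p i * x i ^ 2 - (∑ i ∈ s, p i * x i) ^ 2 := by
  rw [sum_mul_sq_sub_sq_sum_mul_eq s hsum]
  exact sum_nonneg fun i hi => mul_nonneg (hp i hi) (sq_nonneg _)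

theorem sum_mul_sq_sub_sq_sum_mul_pos (hp : ∀ i ∈ s, 0 ≤ p i) (hsum : ∑ i ∈ s, p i = 1)
    {x : ι → ℝ} (hx : ∃ i ∈ s, ∃ j ∈ s, 0 < p i ∧ 0 < p j ∧ x i ≠ x j) :
    0 < ∑ i ∈ s, p i * x i ^ 2 - (∑ i ∈ s, p i * x i) ^ 2 := by
  rw [sum_mul_sq_sub_sq_sum_mul_eq s hsum]
  obtain ⟨i, hi, j, hj, hpi, hpj, hij⟩ := hx
  refine sum_pos' (fun k hk => mul_nonneg (hp k hk) (sq_nonneg _)) ?_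
  by_cases him : x i = ∑ k ∈ s, p k * x k
  · exact ⟨j, hj, mul_pos hpj (sq_pos_of_ne_zero (sub_ne_zero.mpr (him ▸ hij.symm)))⟩
  · exact ⟨i, hi, mul_pos hpi (sq_pos_of_ne_zero (sub_ne_zero.mpr him))⟩

end WeightedVariance

section DegreeSums

theorem natCast_mul_pow_eq {R : Type*} [CommSemiring R] (i : ℕ) (t : R) :
    (i : R) * t ^ i = t * ((i : R) * t ^ (i - 1)) := by
  cases i with
  | zero => simp
  | succ n => rw [Nat.add_sub_cancel, pow_succ]; ring

theorem natCast_sq_mul_pow_eq {R : Type*} [CommRing R] (i : ℕ) (t : R) :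
    (i : R) ^ 2 * t ^ i
      = t ^ 2 * ((i : R) * ((i : R) - 1) * t ^ (i - 2)) + t * ((i : R) * t ^ (i - 1)) := by
  match i with
  | 0 => simp
  | 1 => simp
  | n + 2 =>
    rw [Nat.add_sub_cancel, show n + 2 - 1 = n + 1 by omega]
    push_cast
    ring

variable (s : Finset ℕ) (p : ℕ → ℝ)

theorem sum_natCast_mul_mul_pow (t : ℝ) :
    ∑ i ∈ s, (i : ℝ) * p i * t ^ i = t * ∑ i ∈ s, (i : ℝ) * p i * t ^ (i - 1) := by
  rw [mul_sum]
  exact sum_congr rfl fun i _ => by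
    rw [mul_right_comm, natCast_mul_pow_eq]; ring

theorem sum_natCast_sq_mul_mul_pow (t : ℝ) :
    ∑ i ∈ s, (i : ℝ) ^ 2 * p i * t ^ i
      = t ^ 2 * ∑ i ∈ s, (i : ℝ) * ((i : ℝ) - 1) * p i * t ^ (i - 2)
        + t * ∑ i ∈ s, (i : ℝ) * p i * t ^ (i - 1) := by
  rw [mul_sum, mul_sum, ← sum_add_distrib]
  exact sum_congr rfl fun i _ => by
    rw [mul_right_comm, natCast_sq_mul_pow_eq]; ring

theorem sum_natCast_mul_mul_pow_sub_one_pos {s : Finset ℕ} {p : ℕ → ℝ} (hp : ∀ i ∈ s, 0 ≤ p i)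
    (hdeg : ∃ i ∈ s, 1 ≤ i ∧ 0 < p i) {t : ℝ} (ht : 0 < t) :
    0 < ∑ i ∈ s, (i : ℝ) * p i * t ^ (i - 1) := by
  obtain ⟨i, hi, hi1, hpi⟩ := hdeg
  refine sum_pos' (fun k hk => by have := hp k hk; positivity) ⟨i, hi, ?_⟩
  have : (0 : ℝ) < i := by exact_mod_cast hi1
  positivity

theorem sum_natCast_sq_mul_sub_sq_pos {s : Finset ℕ} {p : ℕ → ℝ} (hp : ∀ i ∈ s, 0 ≤ p i)
    (hsum : ∑ i ∈ s, p i = 1) (hnd : ∃ i ∈ s, ∃ j ∈ s, 0 < p i ∧ 0 < p j ∧ i ≠ j) :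
    0 < ∑ i ∈ s, (i : ℝ) ^ 2 * p i - (∑ i ∈ s, (i : ℝ) * p i) ^ 2 := by
  obtain ⟨i, hi, j, hj, hpi, hpj, hij⟩ := hnd
  simpa only [mul_comm] using sum_mul_sq_sub_sq_sum_mul_pos s hp hsum (x := fun k : ℕ => (k : ℝ))
    ⟨i, hi, j, hj, hpi, hpj, Nat.cast_injective.ne hij⟩

variable {s p} {c : ℕ → ℝ} {t α β : ℝ}

theorem sum_mul_eq_of_eq_pow_add (hc : ∀ i, c i = t ^ i + i * α - β * i * t ^ i) :
    ∑ i ∈ s, p i * c i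
      = ∑ i ∈ s, p i * t ^ i + α * ∑ i ∈ s, (i : ℝ) * p i
        - β * (t * ∑ i ∈ s, (i : ℝ) * p i * t ^ (i - 1)) := by
  rw [← sum_natCast_mul_mul_pow]
  simp only [mul_sum, ← sum_add_distrib, ← sum_sub_distrib]
  exact sum_congr rfl fun i _ => by rw [hc]; ring

theorem sum_mul_sq_eq_of_eq_pow_add (hc : ∀ i, c i = t ^ i + i * α - β * i * t ^ i) :
    ∑ i ∈ s, p i * c i ^ 2
      = ∑ i ∈ s, p i * (t ^ 2) ^ i + α ^ 2 * ∑ i ∈ s, (i : ℝ) ^ 2 * p i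
        + 2 * α * (t * ∑ i ∈ s, (i : ℝ) * p i * t ^ (i - 1))
        - 2 * β * (t ^ 2 * ∑ i ∈ s, (i : ℝ) * p i * (t ^ 2) ^ (i - 1))
        - 2 * α * β * (t ^ 2 * ∑ i ∈ s, (i : ℝ) * ((i : ℝ) - 1) * p i * t ^ (i - 2)
          + t * ∑ i ∈ s, (i : ℝ) * p i * t ^ (i - 1))
        + β ^ 2 * ((t ^ 2) ^ 2 * ∑ i ∈ s, (i : ℝ) * ((i : ℝ) - 1) * p i * (t ^ 2) ^ (i - 2)
          + t ^ 2 * ∑ i ∈ s, (i : ℝ) * p i * (t ^ 2) ^ (i - 1)) := by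
  rw [← sum_natCast_sq_mul_mul_pow, ← sum_natCast_sq_mul_mul_pow, ← sum_natCast_mul_mul_pow,
    ← sum_natCast_mul_mul_pow]
  simp only [mul_sum, ← sum_add_distrib, ← sum_sub_distrib]
  exact sum_congr rfl fun i _ => by rw [hc, ← pow_mul, mul_comm 2 i, pow_mul]; ring

end DegreeSums

theorem NSW_variance_exceeds_MR_general
    (dmax : ℕ) (p : ℕ → ℝ) (hp : ∀ i, 0 ≤ p i)
    (hsum : ∑ i ∈ Finset.range (dmax + 1), p i = 1)
    -- D non-degenerate (not concentrated at a single point)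
    (hnd : ∃ i j, i ≤ dmax ∧ j ≤ dmax ∧ i ≠ j ∧ 0 < p i ∧ 0 < p j)
    (ε : ℝ) (hε0 : 0 < ε) (hε1 : ε < 1)
    (pI qI q2 : ℝ) (hpI : 0 < pI)
    -- conditions of Theorem 1: some individuals of positive degree, and p₁ > 0 if p_I = 1
    (hdeg : ∃ i, 1 ≤ i ∧ i ≤ dmax ∧ 0 < p i)
    (μD σD2 : ℝ)
    (hμD : μD = ∑ i ∈ Finset.range (dmax + 1), (i : ℝ) * p i) (hμpos : 0 < μD)
    (hσD2 : σD2 = (∑ i ∈ Finset.range (dmax + 1), (i : ℝ) ^ 2 * p i) - μD ^ 2)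
    -- the pgf f_D and its first two derivatives
    (f0 f1 f2 : ℝ → ℝ)
    (hf0 : ∀ s, f0 s = ∑ i ∈ Finset.range (dmax + 1), p i * s ^ i)
    (hf1 : ∀ s, f1 s = ∑ i ∈ Finset.range (dmax + 1), (i : ℝ) * p i * s ^ (i - 1))
    (hf2 : ∀ s, f2 s = ∑ i ∈ Finset.range (dmax + 1), (i : ℝ) * ((i : ℝ) - 1) * p i * s ^ (i - 2))
    -- the root z of the final size equation (with f_{D,ε} = (1-ε) f_D) and ρ
    (z : ℝ) (hz0 : 0 < z)
    (hzeq : z - qI = μD⁻¹ * pI * ((1 - ε) * f1 z))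
    (ρ : ℝ) (hρ : ρ = 1 - ε - (1 - ε) * f0 z)
    -- h(z) = b(τ̃) z
    (h b : ℝ) (hden : 0 < 1 - pI * μD⁻¹ * ((1 - ε) * f2 z))
    (hh : h = pI⁻¹ * (qI - z) / (1 - pI * μD⁻¹ * ((1 - ε) * f2 z)))
    (hb : h = b * z)
    -- c = c(τ̃,0) restricted to the susceptible coordinates
    (c : ℕ → ℝ)
    (hc : ∀ i, c i = z ^ i + (i : ℝ) * b * z * (z - qI) - pI * b * (i : ℝ) * z ^ i)
    -- the asymptotic variances of Theorem 1 (MR and NSW)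
    (σMR2 σNSW2 : ℝ)
    (hMR : σMR2 =
      h ^ 2 * ((pI * qI + 2 * (z - qI) ^ 2) * μD
        - pI ^ 2 * ((1 - ε) * f1 (z ^ 2) + z ^ 2 * ((1 - ε) * f2 (z ^ 2))))
      + h * (2 * pI * z * ((1 - ε) * f1 (z ^ 2)) - (z - qI) * μD)
      + 1 - ε - ρ - (1 - ε) * f0 (z ^ 2)
      + (q2 - qI ^ 2) * h ^ 2 * (f2 1 - (1 - ε) * f2 z))
    (hNSW : σNSW2 =
      ρ * (1 - ε - ρ) / (1 - ε)
      - h * (z - qI) * (1 - 2 * ε + 2 * ε * ρ / (1 - ε)) * μD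
      + h ^ 2 * ((pI * qI - 2 * z * (z - qI)) * μD
          + (z - qI) ^ 2 * (σD2 + (1 - 2 * ε) / (1 - ε) * μD ^ 2))
      + (q2 - qI ^ 2) * h ^ 2 * (f2 1 - (1 - ε) * f2 z)) :
    σNSW2 - σMR2 =
      (1 - ε) * ((∑ i ∈ Finset.range (dmax + 1), p i * c i ^ 2)
        - (∑ i ∈ Finset.range (dmax + 1), p i * c i) ^ 2)
      + ε * h ^ 2 * (z - qI) ^ 2 * σD2
    ∧ σMR2 < σNSW2 := by
  have hε : 1 - ε ≠ 0 := by linarith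
  have hzq : 0 < z - qI := by
    obtain ⟨i, hi1, hi, hpi⟩ := hdeg
    have := sum_natCast_mul_mul_pow_sub_one_pos (fun i _ => hp i)
      ⟨i, mem_range_succ_iff.mpr hi, hi1, hpi⟩ hz0
    rw [hzeq, hf1]
    exact mul_pos (mul_pos (inv_pos.mpr hμpos) hpI) (mul_pos (by linarith) this)
  have hh0 : h ≠ 0 := by
    rw [hh]
    exact div_ne_zero (mul_ne_zero (inv_ne_zero hpI.ne') (by linarith)) hden.ne'
  have hσD2pos : 0 < σD2 := by
    obtain ⟨i, j, hi, hj, hij, hpi, hpj⟩ := hnd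
    rw [hσD2, hμD]
    exact sum_natCast_sq_mul_sub_sq_pos (fun k _ => hp k) hsum
      ⟨i, mem_range_succ_iff.mpr hi, j, mem_range_succ_iff.mpr hj, hpi, hpj, hij⟩
  have key : σNSW2 - σMR2 =
      (1 - ε) * ((∑ i ∈ Finset.range (dmax + 1), p i * c i ^ 2)
        - (∑ i ∈ Finset.range (dmax + 1), p i * c i) ^ 2)
      + ε * h ^ 2 * (z - qI) ^ 2 * σD2 := by
    have hc' : ∀ i, c i = z ^ i + i * (b * z * (z - qI)) - pI * b * i * z ^ i :=
      fun i => by rw [hc]; ring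
    have hm2 : ∑ i ∈ range (dmax + 1), (i : ℝ) ^ 2 * p i = σD2 + μD ^ 2 := by linarith
    have hf1z : f1 z = (z - qI) * μD / (pI * (1 - ε)) := by
      rw [hzeq]; field_simp
    have hf2z : f2 z = (pI * h * μD - (qI - z) * μD) / (pI ^ 2 * h * (1 - ε)) := by
      have e2 : h * (1 - pI * μD⁻¹ * ((1 - ε) * f2 z)) = pI⁻¹ * (qI - z) := by
        rw [hh, div_mul_cancel₀ _ hden.ne']
      field_simp at e2 ⊢
      linear_combination -e2
    have hbz : b = h / z := by rw [hb]; field_simp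
    rw [hMR, hNSW, sum_mul_eq_of_eq_pow_add hc', sum_mul_sq_eq_of_eq_pow_add hc', hm2, ← hμD]
    simp only [← hf0, ← hf1, ← hf2]
    rw [hρ, hf1z, hf2z, hbz]
    field_simp
    ring
  refine ⟨key, ?_⟩
  rw [← sub_pos, key]
  have hvar := sum_mul_sq_sub_sq_sum_mul_nonneg (range (dmax + 1)) (fun i _ => hp i) hsum c
  exact add_pos_of_nonneg_of_pos (mul_nonneg (by linarith) hvar) (by positivity)

/-- Comparison of the asymptotic final-size variances for the SIR epidemic on NSW
(i.i.d. degrees) and MR (prescribed degrees) configuration model graphs with a positive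
limiting initial fraction `ε` of infectives and `ε_i = ε p_i`: if the degree
distribution `D` is non-degenerate then
`σ²_NSW - σ²_MR = (1-ε) c Σ_XX cᵀ + ε h(z)² (z-q_I)² σ_D² > 0`,
where `c = c(τ̃,0)` restricted to the susceptible coordinates, `Σ_XX` is the
multinomial covariance matrix of `(p_i)`, and `h(z) = b(τ̃) z`. -/
theorem NSW_variance_exceeds_MR
    (dmax : ℕ) (p : ℕ → ℝ) (hp : ∀ i, 0 ≤ p i)
    (hsum : ∑ i ∈ Finset.range (dmax + 1), p i = 1)
    -- D non-degenerate (not concentrated at a single point)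
    (hnd : ∃ i j, i ≤ dmax ∧ j ≤ dmax ∧ i ≠ j ∧ 0 < p i ∧ 0 < p j)
    (ε : ℝ) (hε0 : 0 < ε) (hε1 : ε < 1)
    (pI qI q2 : ℝ) (hpI : 0 < pI) (hpI1 : pI ≤ 1) (hq : qI = 1 - pI)
    (hq2lb : qI ^ 2 ≤ q2) (hq2ub : q2 ≤ qI)
    -- conditions of Theorem 1: some individuals of positive degree, and p₁ > 0 if p_I = 1
    (hdeg : ∃ i, 1 ≤ i ∧ i ≤ dmax ∧ 0 < p i)
    (hp1 : pI = 1 → 0 < p 1)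
    (μD σD2 : ℝ)
    (hμD : μD = ∑ i ∈ Finset.range (dmax + 1), (i : ℝ) * p i) (hμpos : 0 < μD)
    (hσD2 : σD2 = (∑ i ∈ Finset.range (dmax + 1), (i : ℝ) ^ 2 * p i) - μD ^ 2)
    -- the pgf f_D and its first two derivatives
    (f0 f1 f2 : ℝ → ℝ)
    (hf0 : ∀ s, f0 s = ∑ i ∈ Finset.range (dmax + 1), p i * s ^ i)
    (hf1 : ∀ s, f1 s = ∑ i ∈ Finset.range (dmax + 1), (i : ℝ) * p i * s ^ (i - 1))
    (hf2 : ∀ s, f2 s = ∑ i ∈ Finset.range (dmax + 1), (i : ℝ) * ((i : ℝ) - 1) * p i * s ^ (i - 2))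
    -- the root z of the final size equation (with f_{D,ε} = (1-ε) f_D) and ρ
    (z : ℝ) (hz0 : 0 < z) (hz1 : z < 1)
    (hzeq : z - qI = μD⁻¹ * pI * ((1 - ε) * f1 z))
    (ρ : ℝ) (hρ : ρ = 1 - ε - (1 - ε) * f0 z)
    -- h(z) = b(τ̃) z
    (h b : ℝ) (hden : 0 < 1 - pI * μD⁻¹ * ((1 - ε) * f2 z))
    (hh : h = pI⁻¹ * (qI - z) / (1 - pI * μD⁻¹ * ((1 - ε) * f2 z)))
    (hb : h = b * z)
    -- c = c(τ̃,0) restricted to the susceptible coordinates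
    (c : ℕ → ℝ)
    (hc : ∀ i, c i = z ^ i + (i : ℝ) * b * z * (z - qI) - pI * b * (i : ℝ) * z ^ i)
    -- the asymptotic variances of Theorem 1 (MR and NSW)
    (σMR2 σNSW2 : ℝ)
    (hMR : σMR2 =
      h ^ 2 * ((pI * qI + 2 * (z - qI) ^ 2) * μD
        - pI ^ 2 * ((1 - ε) * f1 (z ^ 2) + z ^ 2 * ((1 - ε) * f2 (z ^ 2))))
      + h * (2 * pI * z * ((1 - ε) * f1 (z ^ 2)) - (z - qI) * μD)
      + 1 - ε - ρ - (1 - ε) * f0 (z ^ 2)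
      + (q2 - qI ^ 2) * h ^ 2 * (f2 1 - (1 - ε) * f2 z))
    (hNSW : σNSW2 =
      ρ * (1 - ε - ρ) / (1 - ε)
      - h * (z - qI) * (1 - 2 * ε + 2 * ε * ρ / (1 - ε)) * μD
      + h ^ 2 * ((pI * qI - 2 * z * (z - qI)) * μD
          + (z - qI) ^ 2 * (σD2 + (1 - 2 * ε) / (1 - ε) * μD ^ 2))
      + (q2 - qI ^ 2) * h ^ 2 * (f2 1 - (1 - ε) * f2 z)) :
    σNSW2 - σMR2 =
      (1 - ε) * ((∑ i ∈ Finset.range (dmax + 1), p i * c i ^ 2)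
        - (∑ i ∈ Finset.range (dmax + 1), p i * c i) ^ 2)
      + ε * h ^ 2 * (z - qI) ^ 2 * σD2
    ∧ σMR2 < σNSW2 :=
  NSW_variance_exceeds_MR_general dmax p hp hsum hnd ε hε0 hε1 pI qI q2 hpI hdeg μD σD2 hμD hμpos
    hσD2 f0 f1 f2 hf0 hf1 hf2 z hz0 hzeq ρ hρ h b hden hh hb c hc σMR2 σNSW2 hMR hNSW
end
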